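/- Let M be an automorphism of a finite-dimensional complex vector space V preserving a bilinear form Q, and let V_λ denote the generalized eigenspace of M for eigenvalue λ. If λ μ ≠ 1 then V_λ and V_μ are Q-orthogonal: Q(u, v) = 0 for all u ∈ V_λ, v ∈ V_μ. -/
import Mathlib


theorem genEigenspaces_orthogonal
    (V : Type*) [AddCommGroup V] [Module ℂ V] [FiniteDimensional ℂ V]
    (Q : V →ₗ[ℂ] V →ₗ[ℂ] ℂ)
    (M : Module.End ℂ V) (hMinv : IsUnit M)
    (hQ : ∀ u v : V, Q (M u) (M v) = Q u v)
    (lam mu : ℂ) (hlm : lam * mu ≠ 1) :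
    ∀ u ∈ M.maxGenEigenspace lam, ∀ v ∈ M.maxGenEigenspace mu, Q u v = 0 := by
  have key : ∀ n k l : ℕ, k + l ≤ n → ∀ u v : V,
      ((M - lam • 1) ^ k) u = 0 → ((M - mu • 1) ^ l) v = 0 → Q u v = 0 := by
    intro n
    induction n with
    | zero =>
      intro k l hkl u v hu hv
      have hk0 : k = 0 := by omega
      subst hk0
      simp only [pow_zero, Module.End.one_apply] at hu
      subst hu; simp
    | succ n ih =>
      intro k l hkl u v hu hv
      match k, l with
      | 0, l =>
        simp only [pow_zero, Module.End.one_apply] at hu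
        subst hu; simp
      | k+1, 0 =>
        simp only [pow_zero, Module.End.one_apply] at hv
        subst hv; simp
      | k+1, l+1 =>
        set u' := (M - lam • 1) u with hu'
        set v' := (M - mu • 1) v with hv'
        have hu's : ((M - lam • 1) ^ k) u' = 0 := by
          rw [hu', ← Module.End.mul_apply, ← pow_succ]; exact hu
        have hv's : ((M - mu • 1) ^ l) v' = 0 := by
          rw [hv', ← Module.End.mul_apply, ← pow_succ]; exact hv
        have hMu : M u = lam • u + u' := by
          rw [hu']; simp [LinearMap.sub_apply]
        have hMv : M v = mu • v + v' := by
          rw [hv']; simp [LinearMap.sub_apply]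
        have h1 : Q u v' = 0 := ih (k+1) l (by omega) u v' hu hv's
        have h2 : Q u' v = 0 := ih k (l+1) (by omega) u' v hu's hv
        have h3 : Q u' v' = 0 := ih k l (by omega) u' v' hu's hv's
        have heq := hQ u v
        rw [hMu, hMv] at heq
        simp only [map_add, map_smul, LinearMap.add_apply, LinearMap.smul_apply,
          smul_eq_mul, h1, h2, h3, mul_zero, add_zero, zero_add] at heq
        have h4 : (lam * mu - 1) * Q u v = 0 := by linear_combination heq
        rcases mul_eq_zero.mp h4 with h | h
        · exact absurd (sub_eq_zero.mp h) hlm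
        · exact h
  intro u hu v hv
  obtain ⟨k, hk⟩ := (Module.End.mem_maxGenEigenspace _ _ _).mp hu
  obtain ⟨l, hl⟩ := (Module.End.mem_maxGenEigenspace _ _ _).mp hv
  exact key (k+l) k l le_rfl u v hk hl
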